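/- arXiv:2506.13612 — 4 statements merged into one kernel-verified Lean document; each statement's English description precedes it below -/
import Mathlib

section
/- Let {Mᵢ}_{i=1}^{2n} be mutually orthogonal matrices (Mᵢ Mⱼᵀ = I if i = j, else 0), let x₁, …, x_n be vectors, and let R₁, …, R_n be vectors with Σᵢ Rᵢ = 0. Define χᵢ = xᵢ Mᵢ + Rᵢ M_{i+n} and dk = Σ_{i=1}^{2n} Mᵢ. Then (Σ_{i=1}^n χᵢ) · dkᵀ = Σ_{i=1}^n xᵢ. -/
open Matrix BigOperators

theorem Matrix.mul_transpose_sum_eq_one_of_orthonormal {ι m k α : Type*} [Fintype ι]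
    [DecidableEq ι] [Fintype k] [DecidableEq m] [Semiring α] (M : ι → Matrix m k α)
    (hM : ∀ i j, M i * (M j)ᵀ = if i = j then 1 else 0) (i : ι) :
    M i * (∑ j, M j)ᵀ = 1 := by
  rw [transpose_sum, Matrix.mul_sum, Finset.sum_eq_single i]
  · simp [hM]
  · intro j _ hji
    simp [hM, Ne.symm hji]
  · simp

/-- VOMCA aggregated decoding. -/
theorem vomca_aggregate_decode (n a b : ℕ)
    (M : (Fin n ⊕ Fin n) → Matrix (Fin a) (Fin b) ℝ)
    (hM : ∀ i j, M i * (M j)ᵀ = if i = j then 1 else 0)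
    (x R : Fin n → Matrix (Fin 1) (Fin a) ℝ)
    (hR : ∑ i, R i = 0)
    (χ : Fin n → Matrix (Fin 1) (Fin b) ℝ)
    (hχ : ∀ i, χ i = x i * M (Sum.inl i) + R i * M (Sum.inr i))
    (dk : Matrix (Fin a) (Fin b) ℝ) (hdk : dk = ∑ i, M i) :
    (∑ i, χ i) * dkᵀ = ∑ i, x i := by
  have hdecode : ∀ i, M i * dkᵀ = 1 := by
    rw [hdk]
    exact mul_transpose_sum_eq_one_of_orthonormal M hM
  calc (∑ i, χ i) * dkᵀ
      = ∑ i, (x i * (M (Sum.inl i) * dkᵀ) + R i * (M (Sum.inr i) * dkᵀ)) := by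
        simp only [Matrix.sum_mul, hχ, Matrix.add_mul, Matrix.mul_assoc]
    _ = ∑ i, x i + ∑ i, R i := by
        simp only [hdecode, Matrix.mul_one, Finset.sum_add_distrib]
    _ = ∑ i, x i := by rw [hR, add_zero]
end

section
/- Let {Mᵢ}_{i=1}^{2n} be mutually orthogonal matrices, Rᵢ vectors with Σᵢ Rᵢ = 0, and 𝒱ᵢ arbitrary matrices of appropriate shape. Define vk = Σ_{i=1}^n 𝒱ᵢ M_{i+n} and χᵢ = xᵢ Mᵢ + Rᵢ M_{i+n}. Then for every i, vk · χᵢᵀ = 𝒱ᵢ · Rᵢᵀ, i.e. every honestly generated ciphertext passes the verification check. -/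
open Matrix BigOperators

namespace Matrix

variable {ι κ m n p R : Type*} [Fintype κ] [Fintype n] [Fintype m] [DecidableEq ι]
  [DecidableEq m] [Semiring R] {M : ι → Matrix m n R}

theorem sum_mul_mul_transpose_of_orthonormal
    (hM : ∀ i j, M i * (M j)ᵀ = if i = j then 1 else 0) (V : κ → Matrix p m R) (f : κ → ι)
    (k : ι) : (∑ j, V j * M (f j)) * (M k)ᵀ = ∑ j, if f j = k then V j else 0 := by
  rw [Matrix.sum_mul]
  refine Finset.sum_congr rfl fun j _ => ?_
  rw [Matrix.mul_assoc, hM]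
  split_ifs <;> simp

theorem sum_mul_mul_transpose_of_orthonormal_of_notMem_range
    (hM : ∀ i j, M i * (M j)ᵀ = if i = j then 1 else 0) (V : κ → Matrix p m R) {f : κ → ι}
    {k : ι} (hk : ∀ j, f j ≠ k) : (∑ j, V j * M (f j)) * (M k)ᵀ = 0 := by
  rw [sum_mul_mul_transpose_of_orthonormal hM]
  exact Finset.sum_eq_zero fun j _ => if_neg (hk j)

theorem sum_mul_mul_transpose_of_orthonormal_self [DecidableEq κ]
    (hM : ∀ i j, M i * (M j)ᵀ = if i = j then 1 else 0) (V : κ → Matrix p m R) {f : κ → ι}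
    (hf : Function.Injective f) (k : κ) : (∑ j, V j * M (f j)) * (M (f k))ᵀ = V k := by
  simp only [sum_mul_mul_transpose_of_orthonormal hM, hf.eq_iff, Finset.sum_ite_eq',
    Finset.mem_univ, if_true]

end Matrix

theorem vomca_verification_general (n a b c : ℕ)
    (M : (Fin n ⊕ Fin n) → Matrix (Fin a) (Fin b) ℝ)
    (hM : ∀ i j, M i * (M j)ᵀ = if i = j then 1 else 0)
    (x R : Fin n → Matrix (Fin 1) (Fin a) ℝ)
    (V : Fin n → Matrix (Fin c) (Fin a) ℝ)
    (vk : Matrix (Fin c) (Fin b) ℝ)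
    (hvk : vk = ∑ i, V i * M (Sum.inr i))
    (χ : Fin n → Matrix (Fin 1) (Fin b) ℝ)
    (hχ : ∀ i, χ i = x i * M (Sum.inl i) + R i * M (Sum.inr i)) :
    ∀ i, vk * (χ i)ᵀ = V i * (R i)ᵀ := by
  intro i
  have h_inl : vk * (M (Sum.inl i))ᵀ = 0 :=
    hvk ▸ sum_mul_mul_transpose_of_orthonormal_of_notMem_range hM V fun _ => Sum.inr_ne_inl
  have h_inr : vk * (M (Sum.inr i))ᵀ = V i :=
    hvk ▸ sum_mul_mul_transpose_of_orthonormal_self hM V Sum.inr_injective i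
  rw [hχ, transpose_add, transpose_mul, transpose_mul, Matrix.mul_add, ← Matrix.mul_assoc,
    ← Matrix.mul_assoc, h_inl, h_inr, Matrix.zero_mul, zero_add]

/-- every honestly generated VOMCA ciphertext passes verification. -/
theorem vomca_verification (n a b c : ℕ)
    (M : (Fin n ⊕ Fin n) → Matrix (Fin a) (Fin b) ℝ)
    (hM : ∀ i j, M i * (M j)ᵀ = if i = j then 1 else 0)
    (x R : Fin n → Matrix (Fin 1) (Fin a) ℝ)
    (hR : ∑ i, R i = 0)
    (V : Fin n → Matrix (Fin c) (Fin a) ℝ)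
    (vk : Matrix (Fin c) (Fin b) ℝ)
    (hvk : vk = ∑ i, V i * M (Sum.inr i))
    (χ : Fin n → Matrix (Fin 1) (Fin b) ℝ)
    (hχ : ∀ i, χ i = x i * M (Sum.inl i) + R i * M (Sum.inr i)) :
    ∀ i, vk * (χ i)ᵀ = V i * (R i)ᵀ :=
  vomca_verification_general n a b c M hM x R V vk hvk χ hχ
end

section
/- Let {Mᵢ}_{i=1}^{2n} ⊂ ℝ^{a×b} be mutually orthogonal matrices and R′ᵢ ∈ ℝ^{a×a} invertible matrices. Define αᵢ = xᵢ · Mᵢᵀ R′ᵢ Mᵢ + M_{i+n}ᵀ R′ᵢ M_{i+n} for scalars xᵢ ∈ ℝ, β = Σ_{i=1}^{2n} Mᵢ, and τ₁ = Σ_{i=1}^n (Mᵢᵀ (R′ᵢ)⁻¹ Mᵢ + M_{i+n}ᵀ (R′ᵢ)⁻¹ (Rᵢ⁽⁰⁾ + ζᵢ M_{i+n})). Then β · (Σᵢ αᵢ) · τ₁ = Σ_{i=1}^n (xᵢ Mᵢ + Rᵢ⁽⁰⁾ + ζᵢ M_{i+n}). -/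
open Matrix BigOperators

/-!
Both `β * ∑ αᵢ` and `τ₁` are sums over the orthonormal family `M` of blocks of the form
`Aₖ * Mₖ` and `Mₖᵀ * Bₖ` respectively (with `Aₖ = xᵢ R′ᵢ` or `R′ᵢ` and `Bₖ` the matching
factor of `τ₁`). Orthonormality `Mᵢ Mⱼᵀ = δᵢⱼ` kills all cross terms of the product, so it
collapses to `∑ₖ Aₖ * Bₖ`, and `R′ᵢ (R′ᵢ)⁻¹ = 1` gives the right-hand side.
-/

namespace Matrix

variable {ι l m n p R : Type*} [Fintype ι] [DecidableEq ι] [Fintype m] [DecidableEq m]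
  [Fintype n] [Semiring R]

theorem sum_mul_mul_sum_transpose_mul_of_orthonormal {M : ι → Matrix m n R}
    (hM : ∀ i j, M i * (M j)ᵀ = if i = j then 1 else 0)
    (A : ι → Matrix l m R) (B : ι → Matrix m p R) :
    (∑ i, A i * M i) * ∑ j, (M j)ᵀ * B j = ∑ i, A i * B i := by
  rw [Matrix.sum_mul]
  refine Finset.sum_congr rfl fun i _ => ?_
  have hcross : ∀ j, A i * M i * ((M j)ᵀ * B j) = if i = j then A i * B i else 0 := by
    intro j
    rw [Matrix.mul_assoc, ← Matrix.mul_assoc (M i), hM]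
    split_ifs with h <;> simp [h]
  simp only [Matrix.mul_sum, hcross, Finset.sum_ite_eq, Finset.mem_univ, if_true]

theorem sum_mul_sum_transpose_mul_of_orthonormal {M : ι → Matrix m n R}
    (hM : ∀ i j, M i * (M j)ᵀ = if i = j then 1 else 0) (B : ι → Matrix m p R) :
    (∑ i, M i) * ∑ j, (M j)ᵀ * B j = ∑ i, B i := by
  simpa using sum_mul_mul_sum_transpose_mul_of_orthonormal hM (fun _ => (1 : Matrix m m R)) B

end Matrix

/-- SRFC identity β · (Σᵢ αᵢ) · τ₁ = Σᵢ (xᵢ Mᵢ + Rᵢ⁽⁰⁾ + ζᵢ M_{i+n}). -/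
theorem srfc_t1_identity (n a b : ℕ)
    (M : (Fin n ⊕ Fin n) → Matrix (Fin a) (Fin b) ℝ)
    (hM : ∀ i j, M i * (M j)ᵀ = if i = j then 1 else 0)
    (R' : Fin n → Matrix (Fin a) (Fin a) ℝ)
    (hR' : ∀ i, IsUnit (R' i))
    (x : Fin n → ℝ)
    (ζ : Fin n → Matrix (Fin a) (Fin a) ℝ)
    (R0 : Fin n → Matrix (Fin a) (Fin b) ℝ)
    (α : Fin n → Matrix (Fin b) (Fin b) ℝ)
    (hα : ∀ i, α i = x i • ((M (Sum.inl i))ᵀ * R' i * M (Sum.inl i))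
        + (M (Sum.inr i))ᵀ * R' i * M (Sum.inr i))
    (β : Matrix (Fin a) (Fin b) ℝ) (hβ : β = ∑ i, M i)
    (τ₁ : Matrix (Fin b) (Fin b) ℝ)
    (hτ₁ : τ₁ = ∑ i, ((M (Sum.inl i))ᵀ * (R' i)⁻¹ * M (Sum.inl i)
        + (M (Sum.inr i))ᵀ * (R' i)⁻¹ * (R0 i + ζ i * M (Sum.inr i)))) :
    β * (∑ i, α i) * τ₁ = ∑ i, (x i • M (Sum.inl i) + R0 i + ζ i * M (Sum.inr i)) := by
  have hinv : ∀ i, R' i * (R' i)⁻¹ = 1 := fun i =>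
    mul_nonsing_inv _ ((isUnit_iff_isUnit_det _).mp (hR' i))
  set A : Fin n ⊕ Fin n → Matrix (Fin a) (Fin a) ℝ := Sum.elim (fun i => x i • R' i) R'
  set B : Fin n ⊕ Fin n → Matrix (Fin a) (Fin b) ℝ :=
    Sum.elim (fun i => (R' i)⁻¹ * M (Sum.inl i)) (fun i => (R' i)⁻¹ * (R0 i + ζ i * M (Sum.inr i)))
  have hα_sum : ∑ i, α i = ∑ k, (M k)ᵀ * (A k * M k) := by
    simp only [hα, Fintype.sum_sum_type, A, Sum.elim_inl, Sum.elim_inr, Finset.sum_add_distrib,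
      Matrix.mul_smul, Matrix.smul_mul, Matrix.mul_assoc]
  have hτ₁_sum : τ₁ = ∑ k, (M k)ᵀ * B k := by
    simp only [hτ₁, Fintype.sum_sum_type, B, Sum.elim_inl, Sum.elim_inr, Finset.sum_add_distrib,
      Matrix.mul_assoc]
  calc β * (∑ i, α i) * τ₁ = (∑ k, A k * M k) * ∑ k, (M k)ᵀ * B k := by
        rw [hβ, hα_sum, hτ₁_sum, sum_mul_sum_transpose_mul_of_orthonormal hM]
    _ = ∑ k, A k * B k := sum_mul_mul_sum_transpose_mul_of_orthonormal hM A B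
    _ = ∑ i, (x i • M (Sum.inl i) + R0 i + ζ i * M (Sum.inr i)) := by
        simp only [Fintype.sum_sum_type, A, B, Sum.elim_inl, Sum.elim_inr, Matrix.smul_mul,
          ← Matrix.mul_assoc, hinv, Matrix.one_mul, ← Finset.sum_add_distrib, add_assoc]
end

section
/- Let {Mᵢ}_{i=1}^{n} and {M′ⱼ}_{j=1}^{m} each be families of mutually orthogonal matrices, and 𝒞 : [2n] → [2m] an index map. Given χᵢ = xᵢ Mᵢ + Rᵢ M_{i+n} and transformation key tkᵢ = Mᵢᵀ M′_{𝒞(i)} + M_{i+n}ᵀ (M′_{𝒞(i+n)} + Rᵢ⁻¹ R′ᵢ), one has χᵢ · tkᵢ = χ′ᵢ + R′ᵢ, where χ′ᵢ = xᵢ M′_{𝒞(i)} + Rᵢ M′_{𝒞(i+n)}. -/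
open Matrix BigOperators

/-! Right-multiplying `χ = x • P + R * Q` by `Pᵀ` and by `Qᵀ` reads off its coefficients `x` and `R`,
since `P` and `Q` are orthonormal and mutually orthogonal; the key `Pᵀ * N + Qᵀ * N'` therefore
re-encodes them over `N` and `N'`. With `N' = M'_{𝒞(i+n)} + R⁻¹ * R'` the coefficient `R` cancels
`R⁻¹`, leaving the additive mask `R'`. -/

section Orthogonal

variable {ι κ α : Type*} [Fintype ι] [Fintype κ] [DecidableEq ι] [CommRing α]
  {P Q : Matrix ι κ α}

theorem smul_add_mul_mul_transpose_left (hPP : P * Pᵀ = 1) (hQP : Q * Pᵀ = 0)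
    (x : α) (R : Matrix ι ι α) : (x • P + R * Q) * Pᵀ = x • 1 := by
  rw [Matrix.add_mul, smul_mul, hPP, Matrix.mul_assoc, hQP, Matrix.mul_zero, add_zero]

theorem smul_add_mul_mul_transpose_right (hPQ : P * Qᵀ = 0) (hQQ : Q * Qᵀ = 1)
    (x : α) (R : Matrix ι ι α) : (x • P + R * Q) * Qᵀ = R := by
  rw [Matrix.add_mul, smul_mul, hPQ, smul_zero, Matrix.mul_assoc, hQQ, Matrix.mul_one, zero_add]

theorem smul_add_mul_mul_transpose_mul_add (hPP : P * Pᵀ = 1) (hPQ : P * Qᵀ = 0)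
    (hQP : Q * Pᵀ = 0) (hQQ : Q * Qᵀ = 1) (x : α) (R : Matrix ι ι α) {ν : Type*}
    (N N' : Matrix ι ν α) :
    (x • P + R * Q) * (Pᵀ * N + Qᵀ * N') = x • N + R * N' := by
  rw [Matrix.mul_add, ← Matrix.mul_assoc, ← Matrix.mul_assoc,
    smul_add_mul_mul_transpose_left hPP hQP, smul_add_mul_mul_transpose_right hPQ hQQ, smul_mul,
    Matrix.one_mul]

end Orthogonal

theorem skt_correctness_general (n m a b b' : ℕ)
    (M : (Fin n ⊕ Fin n) → Matrix (Fin a) (Fin b) ℝ)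
    (hM : ∀ i j, M i * (M j)ᵀ = if i = j then 1 else 0)
    (M' : (Fin m ⊕ Fin m) → Matrix (Fin a) (Fin b') ℝ)
    (C : (Fin n ⊕ Fin n) → (Fin m ⊕ Fin m))
    (x : Fin n → ℝ)
    (R : Fin n → Matrix (Fin a) (Fin a) ℝ) (hR : ∀ i, IsUnit (R i))
    (R'' : Fin n → Matrix (Fin a) (Fin b') ℝ)
    (χ : Fin n → Matrix (Fin a) (Fin b) ℝ)
    (hχ : ∀ i, χ i = x i • M (Sum.inl i) + R i * M (Sum.inr i))
    (tk : Fin n → Matrix (Fin b) (Fin b') ℝ)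
    (htk : ∀ i, tk i = (M (Sum.inl i))ᵀ * M' (C (Sum.inl i))
        + (M (Sum.inr i))ᵀ * (M' (C (Sum.inr i)) + (R i)⁻¹ * R'' i))
    (χ' : Fin n → Matrix (Fin a) (Fin b') ℝ)
    (hχ' : ∀ i, χ' i = x i • M' (C (Sum.inl i)) + R i * M' (C (Sum.inr i))) :
    ∀ i, χ i * tk i = χ' i + R'' i := by
  intro i
  have hll : M (.inl i) * (M (.inl i))ᵀ = 1 := by simpa using hM (.inl i) (.inl i)
  have hlr : M (.inl i) * (M (.inr i))ᵀ = 0 := by simpa using hM (.inl i) (.inr i)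
  have hrl : M (.inr i) * (M (.inl i))ᵀ = 0 := by simpa using hM (.inr i) (.inl i)
  have hrr : M (.inr i) * (M (.inr i))ᵀ = 1 := by simpa using hM (.inr i) (.inr i)
  have hdet : IsUnit (R i).det := (isUnit_iff_isUnit_det (R i)).mp (hR i)
  rw [hχ, htk, hχ', smul_add_mul_mul_transpose_mul_add hll hlr hrl hrr, Matrix.mul_add,
    ← Matrix.mul_assoc (R i), Matrix.mul_nonsing_inv _ hdet, Matrix.one_mul, add_assoc]

/-- correctness of the Secure Key Transformation (SKT) mechanism:
χᵢ · tkᵢ = χ′ᵢ + R′ᵢ. -/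
theorem skt_correctness (n m a b b' : ℕ)
    (M : (Fin n ⊕ Fin n) → Matrix (Fin a) (Fin b) ℝ)
    (hM : ∀ i j, M i * (M j)ᵀ = if i = j then 1 else 0)
    (M' : (Fin m ⊕ Fin m) → Matrix (Fin a) (Fin b') ℝ)
    (hM' : ∀ i j, M' i * (M' j)ᵀ = if i = j then 1 else 0)
    (C : (Fin n ⊕ Fin n) → (Fin m ⊕ Fin m))
    (x : Fin n → ℝ)
    (R : Fin n → Matrix (Fin a) (Fin a) ℝ) (hR : ∀ i, IsUnit (R i))
    (R'' : Fin n → Matrix (Fin a) (Fin b') ℝ)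
    (χ : Fin n → Matrix (Fin a) (Fin b) ℝ)
    (hχ : ∀ i, χ i = x i • M (Sum.inl i) + R i * M (Sum.inr i))
    (tk : Fin n → Matrix (Fin b) (Fin b') ℝ)
    (htk : ∀ i, tk i = (M (Sum.inl i))ᵀ * M' (C (Sum.inl i))
        + (M (Sum.inr i))ᵀ * (M' (C (Sum.inr i)) + (R i)⁻¹ * R'' i))
    (χ' : Fin n → Matrix (Fin a) (Fin b') ℝ)
    (hχ' : ∀ i, χ' i = x i • M' (C (Sum.inl i)) + R i * M' (C (Sum.inr i))) :
    ∀ i, χ i * tk i = χ' i + R'' i :=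
  skt_correctness_general n m a b b' M hM M' C x R hR R'' χ hχ tk htk χ' hχ'
end
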